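/- The effective affinity dominates the steady-state edge force in modulus (Theorem 'bigger'): Assume in addition that the kernel of W (as a linear map v ↦ W *ᵥ v) is one-dimensional and that the kernel of W_hid is one-dimensional, and let r : Fin n → ℝ be strictly positive with ∑ i, r i = 1 and W *ᵥ r = 0 (the steady state of the full dynamics). Then |Q| ≥ |F|, where F := Real.log (W a b * r b / (W b a * r a)) is the steady-state force along the observable edge and Q := Real.log (W a b * p b / (W b a * p a)) is the effective affinity. -/

import Mathlib

/-!
Put `u = r / p`. Because `W_hid p = 0` and the columns of `W_hid` sum to zero, the Dirichlet-form
identity `2 ⟨u, W_hid (p u)⟩ = -∑ᵢⱼ (W_hid)ᵢⱼ pⱼ (uᵢ - uⱼ)²` gives `⟨u, W_hid r⟩ ≤ 0`.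
Since `W r = 0`, `W_hid r = -W_mar r = -J (e_a - e_b)` with `J = W_ab r_b - W_ba r_a` the
steady-state current, so `J (u_a - u_b) ≥ 0`. Finally `Q = F + log (u_a / u_b)`, and the sign
condition says that `F` (which has the sign of `J`) and `log (u_a / u_b)` have the same sign.
-/

open Matrix

section GeneratorQuadraticForm

variable {ι R : Type*} [Fintype ι]

theorem two_mul_dotProduct_mulVec_mul_eq_neg_sum [CommRing R] {G : Matrix ι ι R} {p : ι → R}
    (hcol : ∀ j, ∑ i, G i j = 0) (hGp : G *ᵥ p = 0) (u : ι → R) :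
    2 * (u ⬝ᵥ G *ᵥ (p * u)) = -∑ i, ∑ j, G i j * p j * (u i - u j) ^ 2 := by
  have hrow : ∑ i, ∑ j, G i j * p j * u i ^ 2 = 0 := by
    calc ∑ i, ∑ j, G i j * p j * u i ^ 2 = ∑ i, (G *ᵥ p) i * u i ^ 2 := by
          simp only [mulVec, dotProduct, Finset.sum_mul]
      _ = 0 := by simp [hGp]
  have hcol' : ∑ i, ∑ j, G i j * p j * u j ^ 2 = 0 := by
    calc ∑ i, ∑ j, G i j * p j * u j ^ 2 = ∑ j, (∑ i, G i j) * (p j * u j ^ 2) := by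
          rw [Finset.sum_comm]; simp only [Finset.sum_mul, mul_assoc]
      _ = 0 := by simp [hcol]
  have hcross : u ⬝ᵥ G *ᵥ (p * u) = ∑ i, ∑ j, G i j * p j * u i * u j := by
    simp only [dotProduct, mulVec, Finset.mul_sum, Pi.mul_apply]
    refine Finset.sum_congr rfl fun i _ => Finset.sum_congr rfl fun j _ => by ring
  have hexpand : ∑ i, ∑ j, G i j * p j * (u i - u j) ^ 2 = ∑ i, ∑ j, G i j * p j * u i ^ 2
      - 2 * ∑ i, ∑ j, G i j * p j * u i * u j + ∑ i, ∑ j, G i j * p j * u j ^ 2 := by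
    simp only [Finset.mul_sum, ← Finset.sum_sub_distrib, ← Finset.sum_add_distrib]
    refine Finset.sum_congr rfl fun i _ => Finset.sum_congr rfl fun j _ => by ring
  rw [hexpand, hrow, hcol', hcross]
  ring

theorem dotProduct_mulVec_mul_nonpos [CommRing R] [LinearOrder R] [IsStrictOrderedRing R]
    {G : Matrix ι ι R} {p : ι → R}
    (hoff : ∀ i j, i ≠ j → 0 ≤ G i j) (hcol : ∀ j, ∑ i, G i j = 0)
    (hp : 0 ≤ p) (hGp : G *ᵥ p = 0) (u : ι → R) :
    u ⬝ᵥ G *ᵥ (p * u) ≤ 0 := by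
  have hsum : 0 ≤ ∑ i, ∑ j, G i j * p j * (u i - u j) ^ 2 := by
    refine Finset.sum_nonneg fun i _ => Finset.sum_nonneg fun j _ => ?_
    rcases eq_or_ne i j with rfl | hij
    · simp
    · exact mul_nonneg (mul_nonneg (hoff i j hij) (hp j)) (sq_nonneg _)
  have := two_mul_dotProduct_mulVec_mul_eq_neg_sum hcol hGp u
  linarith

end GeneratorQuadraticForm

theorem log_div_mul_log_div_nonneg {x y z w : ℝ} (hx : 0 < x) (hy : 0 < y) (hz : 0 < z)
    (hw : 0 < w) (h : 0 ≤ (x - y) * (z - w)) :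
    0 ≤ Real.log (x / y) * Real.log (z / w) := by
  rw [Real.log_div hx.ne' hy.ne', Real.log_div hz.ne' hw.ne']
  rcases lt_trichotomy x y with hxy | rfl | hxy
  · have hzw : z ≤ w := by nlinarith
    have := Real.log_lt_log hx hxy
    have := Real.log_le_log hz hzw
    nlinarith
  · simp
  · have hzw : w ≤ z := by nlinarith
    have := Real.log_lt_log hy hxy
    have := Real.log_le_log hw hzw
    nlinarith

theorem abs_le_abs_add_of_mul_nonneg {R : Type*} [CommRing R] [LinearOrder R]
    [IsStrictOrderedRing R] {F G : R} (h : 0 ≤ F * G) : |F| ≤ |F + G| := by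
  rw [← sq_le_sq]
  nlinarith [sq_nonneg G]

/-- The marginal generator `W_mar = W - W_hid` of the edge `a ⇄ b`, as a rank-one matrix. -/
noncomputable def edgeGenerator {n : ℕ} (W : Matrix (Fin n) (Fin n) ℝ) (a b : Fin n) :
    Matrix (Fin n) (Fin n) ℝ :=
  vecMulVec (Pi.single a 1 - Pi.single b 1) (W a b • Pi.single b 1 - W b a • Pi.single a 1)

section EdgeGenerator

variable {n : ℕ} {W Whid : Matrix (Fin n) (Fin n) ℝ} {a b : Fin n}

theorem sum_edgeGenerator_apply (j : Fin n) : ∑ i, edgeGenerator W a b i j = 0 := by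
  simp [edgeGenerator, vecMulVec_apply, ← Finset.sum_mul, Finset.sum_sub_distrib]

theorem edgeGenerator_mulVec (r : Fin n → ℝ) :
    edgeGenerator W a b *ᵥ r =
      (W a b * r b - W b a * r a) • (Pi.single a 1 - Pi.single b 1) := by
  rw [edgeGenerator, vecMulVec_mulVec, op_smul_eq_smul]
  simp [mul_comm]

theorem sub_hidden_eq_edgeGenerator (hab : a ≠ b)
    (hH1 : Whid a b = 0) (hH2 : Whid b a = 0)
    (hH3 : Whid a a = W a a + W b a)
    (hH4 : Whid b b = W b b + W a b)
    (hH5 : ∀ i j, ¬(i = a ∧ j = b) → ¬(i = b ∧ j = a) → ¬(i = a ∧ j = a) →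
      ¬(i = b ∧ j = b) → Whid i j = W i j) :
    W - Whid = edgeGenerator W a b := by
  ext i j
  have hij := hH5 i j
  simp only [edgeGenerator, Matrix.sub_apply, vecMulVec_apply, Pi.sub_apply, Pi.smul_apply,
    Pi.single_apply, smul_eq_mul]
  by_cases hia : i = a <;> by_cases hib : i = b <;> by_cases hja : j = a <;>
    by_cases hjb : j = b <;> simp_all

theorem hidden_offDiag_nonneg (hW1 : ∀ i j, i ≠ j → 0 ≤ W i j)
    (hH1 : Whid a b = 0) (hH2 : Whid b a = 0)
    (hH5 : ∀ i j, ¬(i = a ∧ j = b) → ¬(i = b ∧ j = a) → ¬(i = a ∧ j = a) →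
      ¬(i = b ∧ j = b) → Whid i j = W i j) (i j : Fin n) (hij : i ≠ j) :
    0 ≤ Whid i j := by
  by_cases h₁ : i = a ∧ j = b
  · rw [h₁.1, h₁.2, hH1]
  by_cases h₂ : i = b ∧ j = a
  · rw [h₂.1, h₂.2, hH2]
  rw [hH5 i j h₁ h₂ (fun h => hij (h.1.trans h.2.symm)) (fun h => hij (h.1.trans h.2.symm))]
  exact hW1 i j hij

end EdgeGenerator

theorem effective_affinity_bigger {n : ℕ}
    (W Whid : Matrix (Fin n) (Fin n) ℝ)
    (hW1 : ∀ i j, i ≠ j → 0 ≤ W i j)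
    (hW2 : ∀ j, ∑ i, W i j = 0)
    (a b : Fin n) (hab : a ≠ b)
    (hWab : 0 < W a b) (hWba : 0 < W b a)
    (hH1 : Whid a b = 0) (hH2 : Whid b a = 0)
    (hH3 : Whid a a = W a a + W b a)
    (hH4 : Whid b b = W b b + W a b)
    (hH5 : ∀ i j, ¬(i = a ∧ j = b) → ¬(i = b ∧ j = a) → ¬(i = a ∧ j = a) →
      ¬(i = b ∧ j = b) → Whid i j = W i j)
    (p : Fin n → ℝ) (hp1 : ∀ i, 0 < p i)
    (hp3 : Whid *ᵥ p = 0)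
    (r : Fin n → ℝ) (hr1 : ∀ i, 0 < r i) (hr3 : W *ᵥ r = 0) :
    |Real.log (W a b * r b / (W b a * r a))|
      ≤ |Real.log (W a b * p b / (W b a * p a))| := by
  have hmar := sub_hidden_eq_edgeGenerator hab hH1 hH2 hH3 hH4 hH5
  have hcol (j : Fin n) : ∑ i, Whid i j = 0 := by
    simpa [Finset.sum_sub_distrib, hW2, sum_edgeGenerator_apply] using
      congrArg (fun M => ∑ i, M i j) hmar
  have hflux : Whid *ᵥ r = (W b a * r a - W a b * r b) • (Pi.single a 1 - Pi.single b 1) := by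
    rw [show Whid = W - edgeGenerator W a b by rw [← hmar, sub_sub_cancel], sub_mulVec, hr3,
      edgeGenerator_mulVec, zero_sub, ← neg_smul, neg_sub]
  have hsign : 0 ≤ (W a b * r b - W b a * r a) * (r a / p a - r b / p b) := by
    have hdissip := dotProduct_mulVec_mul_nonpos (hidden_offDiag_nonneg hW1 hH1 hH2 hH5) hcol
      (fun i => (hp1 i).le) hp3 (r / p)
    rw [show p * (r / p) = r by ext i; simp [mul_div_cancel₀ _ (hp1 i).ne'], hflux] at hdissip
    simp only [dotProduct_smul, dotProduct_sub, dotProduct_single, Pi.div_apply, mul_one,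
      smul_eq_mul] at hdissip
    linarith
  have := hp1 a; have := hp1 b; have := hr1 a; have := hr1 b
  have hsplit : W a b * p b / (W b a * p a)
      = W a b * r b / (W b a * r a) * ((r a / p a) / (r b / p b)) := by
    field_simp
  rw [hsplit, Real.log_mul (by positivity) (by positivity)]
  refine abs_le_abs_add_of_mul_nonneg (log_div_mul_log_div_nonneg (by positivity)
    (by positivity) (by positivity) (by positivity) hsign)
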